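/- arXiv:math/0210009 — 4 statements merged into one kernel-verified Lean document; each statement's English description precedes it below -/
import Mathlib

section
/- Let R be a commutative ring, I ⊆ R an ideal, and suppose elements ℓ₀, x₁, …, x_n ∈ R and polynomials p ∈ R[t], w₁, …, w_n ∈ R[t] satisfy p(ℓ₀) ∈ I and p'(ℓ₀)·x_i − w_i(ℓ₀) ∈ I for all i. Then for any polynomial f ∈ R[X₁, …, X_n] of total degree at most d, with homogenization f^h ∈ R[X₀, X₁, …, X_n] up to degree d, one has p'(ℓ₀)^d · f(x₁, …, x_n) − f^h(p'(ℓ₀), w₁(ℓ₀), …, w_n(ℓ₀)) ∈ I. -/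
/-! Modulo `I` one has `w_i(ℓ₀) ≡ a · x_i` with `a = p'(ℓ₀)`, and each monomial `c X^m` of `f`
becomes `c a^(d - |m|) (a x)^m = a^d · c x^m` in `f^h`. -/

open MvPolynomial

/-- The homogenization of `f` up to degree `d`, with the new homogenizing variable
placed at index `0` of `Fin (n+1)`. -/
noncomputable def homogenize {R : Type*} [CommRing R] (n d : ℕ)
    (f : MvPolynomial (Fin n) R) : MvPolynomial (Fin (n + 1)) R :=
  f.support.sum fun m =>
    MvPolynomial.monomial
      (Finsupp.equivFunOnFinite.symm
        (Fin.cons (d - m.sum fun _ e => e) fun i => m i))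
      (MvPolynomial.coeff m f)

theorem eval₂_homogenize {R S : Type*} [CommRing R] [CommRing S] (φ : R →+* S) (n d : ℕ)
    (a : S) (y : Fin n → S) (f : MvPolynomial (Fin n) R) :
    eval₂ φ (Fin.cons a y) (homogenize n d f) =
      ∑ m ∈ f.support, φ (coeff m f) * a ^ (d - m.sum fun _ e => e) * ∏ i, y i ^ m i := by
  simp only [homogenize, eval₂_sum, eval₂_monomial, Finsupp.prod_fintype _ _ (fun _ => pow_zero _),
    Finsupp.coe_equivFunOnFinite_symm, Fin.prod_univ_succ, Fin.cons_zero, Fin.cons_succ, mul_assoc]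

theorem eval₂_homogenize_cons_mul {R S : Type*} [CommRing R] [CommRing S] (φ : R →+* S)
    {n d : ℕ} (a : S) (x : Fin n → S) {f : MvPolynomial (Fin n) R} (hf : f.totalDegree ≤ d) :
    eval₂ φ (Fin.cons a fun i => a * x i) (homogenize n d f) = a ^ d * eval₂ φ x f := by
  rw [eval₂_homogenize, eval₂_eq', Finset.mul_sum]
  refine Finset.sum_congr rfl fun m hm => ?_
  have hdeg : (m.sum fun _ e => e) ≤ d := (le_totalDegree hm).trans hf
  have hsum : (m.sum fun _ e => e) = ∑ i, m i := Finsupp.sum_fintype _ _ fun _ => rfl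
  obtain ⟨k, hk⟩ := Nat.exists_eq_add_of_le hdeg
  simp only [mul_pow, Finset.prod_mul_distrib, Finset.prod_pow_eq_pow_sum, ← hsum, hk,
    Nat.add_sub_cancel_left, pow_add]
  ring

theorem stmt5_general {R : Type*} [CommRing R] (n d : ℕ) (I : Ideal R)
    (ℓ₀ : R) (x : Fin n → R) (p : Polynomial R) (w : Fin n → Polynomial R)
    (hw : ∀ i, Polynomial.eval ℓ₀ (Polynomial.derivative p) * x i
      - Polynomial.eval ℓ₀ (w i) ∈ I)
    (f : MvPolynomial (Fin n) R) (hf : f.totalDegree ≤ d) :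
    (Polynomial.eval ℓ₀ (Polynomial.derivative p)) ^ d * MvPolynomial.eval x f -
      MvPolynomial.eval
        (Fin.cons (Polynomial.eval ℓ₀ (Polynomial.derivative p))
          fun i => Polynomial.eval ℓ₀ (w i))
        (homogenize n d f) ∈ I := by
  set a := Polynomial.eval ℓ₀ (Polynomial.derivative p)
  set q := Ideal.Quotient.mk I
  have hcons : (q ∘ Fin.cons a fun i => Polynomial.eval ℓ₀ (w i)) =
      Fin.cons (q a) fun i => q a * (q ∘ x) i := by
    rw [Fin.comp_cons]
    congr 1
    funext i
    rw [Function.comp_apply, Function.comp_apply, ← map_mul, Ideal.Quotient.eq.mpr (hw i)]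
  have hq : ∀ {m} (v : Fin m → R) g, q (MvPolynomial.eval v g) = eval₂ q (q ∘ v) g :=
    fun v g => eval₂_comp_left q (RingHom.id R) v g
  rw [← Ideal.Quotient.eq, map_mul, map_pow, hq, hq, hcons, eval₂_homogenize_cons_mul _ _ _ hf]

/-- evaluating a polynomial on a geometric resolution modulo an ideal:
`p'(ℓ₀)^d · f(x) ≡ f^h(p'(ℓ₀), w₁(ℓ₀), …, w_n(ℓ₀)) (mod I)`. -/
theorem stmt5 {R : Type*} [CommRing R] (n d : ℕ) (I : Ideal R)
    (ℓ₀ : R) (x : Fin n → R) (p : Polynomial R) (w : Fin n → Polynomial R)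
    (hp : Polynomial.eval ℓ₀ p ∈ I)
    (hw : ∀ i, Polynomial.eval ℓ₀ (Polynomial.derivative p) * x i
      - Polynomial.eval ℓ₀ (w i) ∈ I)
    (f : MvPolynomial (Fin n) R) (hf : f.totalDegree ≤ d) :
    (Polynomial.eval ℓ₀ (Polynomial.derivative p)) ^ d * MvPolynomial.eval x f -
      MvPolynomial.eval
        (Fin.cons (Polynomial.eval ℓ₀ (Polynomial.derivative p))
          fun i => Polynomial.eval ℓ₀ (w i))
        (homogenize n d f) ∈ I :=
  stmt5_general n d I ℓ₀ x p w hw f hf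
end

section
/- (Zippel–Schwartz) Let R be an integral domain, f ∈ R[x₁, …, x_n] a nonzero polynomial of total degree at most d, and S ⊆ R a finite set. Then the number of points a ∈ S^n with f(a) = 0 is at most d · |S|^{n−1}. -/
open MvPolynomial
open scoped Classical

namespace MvPolynomial

variable {R : Type*} [CommRing R]

lemma card_zeros_eq_zero_of_isEmpty {p : MvPolynomial (Fin 0) R} (hp : p ≠ 0) (S : Finset R) :
    ((Fintype.piFinset fun _ : Fin 0 => S).filter fun x => eval x p = 0).card = 0 := by
  rw [Finset.card_eq_zero, Finset.filter_eq_empty_iff]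
  intro x _ hx
  rw [p.eq_C_of_isEmpty, eval_C] at hx
  exact hp (by rw [p.eq_C_of_isEmpty, hx, map_zero])

/-- `schwartz_zippel_totalDegree` with the denominators cleared; since that form divides by
`#S ^ n` and `#S`, the cases `n = 0` and `S = ∅` are treated separately. -/
lemma card_zeros_le_totalDegree_mul_card_pow [IsDomain R] {n : ℕ} {p : MvPolynomial (Fin n) R}
    (hp : p ≠ 0) (S : Finset R) :
    ((Fintype.piFinset fun _ : Fin n => S).filter fun x => eval x p = 0).card ≤
      p.totalDegree * S.card ^ (n - 1) := by
  cases n with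
  | zero => exact (card_zeros_eq_zero_of_isEmpty hp S).trans_le (Nat.zero_le _)
  | succ m =>
    obtain rfl | hS := S.eq_empty_or_nonempty
    · simp
    have hS : (0 : ℚ≥0) < S.card := by exact_mod_cast hS.card_pos
    have h := schwartz_zippel_totalDegree hp S
    rw [div_le_div_iff₀ (by positivity) hS, pow_succ, ← mul_assoc,
      mul_le_mul_iff_left₀ hS] at h
    exact_mod_cast h

end MvPolynomial

/-- Zippel–Schwartz: a nonzero polynomial of total degree at most `d`
over an integral domain has at most `d·|S|^{n−1}` zeros in `S^n`. -/
theorem stmt8 {R : Type*} [CommRing R] [IsDomain R] (n d : ℕ)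
    (f : MvPolynomial (Fin n) R) (hf : f ≠ 0) (hd : f.totalDegree ≤ d)
    (S : Finset R) :
    ((Fintype.piFinset fun _ : Fin n => S).filter
        fun a => MvPolynomial.eval a f = 0).card ≤ d * S.card ^ (n - 1) :=
  (card_zeros_le_totalDegree_mul_card_pow hf S).trans (Nat.mul_le_mul_right _ hd)
end

section
/- Let K ⊆ L be a finite separable field extension of degree D, ℓ₀ a primitive element with minimal polynomial p ∈ K[t], and w₁, …, w_n ∈ K[t] with p'(ℓ₀)·x_i = w_i(ℓ₀) for given x₁, …, x_n ∈ L. Let ℓ := c₀ + c₁x₁ + ⋯ + c_nx_n ∈ L for scalars c_i ∈ K. Then p'(ℓ₀)·ℓ = v(ℓ₀) where v := c₀·p' + c₁·w₁ + ⋯ + c_n·w_n ∈ K[t], and det( p'(M_p)·t − v(M_p) ) = det(p'(M_p)) · χ_ℓ(t), where M_p is the companion matrix of p and χ_ℓ is the characteristic polynomial of multiplication by ℓ on L. -/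
/-!
In the power basis `1, ℓ₀, …, ℓ₀^(D-1)` of `L`, multiplication by `ℓ₀` has matrix `M_p`, so
multiplication by `q(ℓ₀)` has matrix `q(M_p)` for every `q ∈ K[t]`. Writing `M_ℓ` for the matrix of
multiplication by `ℓ`, the identity `p'(ℓ₀)·ℓ = v(ℓ₀)` thus becomes `v(M_p) = p'(M_p)·M_ℓ`, whence
`p'(M_p)·t − v(M_p) = p'(M_p)·(t − M_ℓ)` and the determinant factors.
-/

open Polynomial

/-- The companion matrix of a polynomial `p`, of size `p.natDegree`. -/
noncomputable def companionMatrix {K : Type*} [CommRing K] (p : K[X]) :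
    Matrix (Fin p.natDegree) (Fin p.natDegree) K :=
  Matrix.of fun i j =>
    if (j : ℕ) + 1 = p.natDegree then -p.coeff i
    else if (i : ℕ) = (j : ℕ) + 1 then 1 else 0

theorem Matrix.det_X_smul_map_C_sub_map_C_mul {R n : Type*} [CommRing R] [Fintype n]
    [DecidableEq n] (A B : Matrix n n R) :
    ((X : R[X]) • A.map C - (A * B).map C).det = C A.det * B.charpoly := by
  have hfactor : (X : R[X]) • A.map C - (A * B).map C = A.map C * B.charmatrix := by
    rw [Matrix.charmatrix, Matrix.map_mul, mul_sub, RingHom.mapMatrix_apply, Matrix.scalar_apply,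
      ← Matrix.smul_one_eq_diagonal, Matrix.mul_smul, Matrix.mul_one]
  rw [hfactor, Matrix.det_mul, Matrix.charpoly, ← RingHom.mapMatrix_apply, ← RingHom.map_det]

section CompanionMatrix

variable {R S : Type*} [CommRing R] [Ring S] [Algebra R S] {a : S}

theorem pow_natDegree_minpoly_eq_sum (ha : IsIntegral R a) :
    a ^ (minpoly R a).natDegree =
      ∑ i : Fin (minpoly R a).natDegree, (-(minpoly R a).coeff i) • a ^ (i : ℕ) := by
  have h := minpoly.aeval R a
  rw [aeval_eq_sum_range, Finset.sum_range_succ, (minpoly.monic ha).coeff_natDegree, one_smul,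
    add_eq_zero_iff_neg_eq'] at h
  simp only [← h, neg_smul, Finset.sum_neg_distrib, neg_neg, Fin.sum_univ_eq_sum_range
    (fun i => (minpoly R a).coeff i • a ^ i)]

theorem leftMulMatrix_eq_companionMatrix (ha : IsIntegral R a)
    (b : Module.Basis (Fin (minpoly R a).natDegree) R S) (hb : ∀ i, b i = a ^ (i : ℕ)) :
    Algebra.leftMulMatrix b a = companionMatrix (minpoly R a) := by
  ext i j
  rw [Algebra.leftMulMatrix_eq_repr_mul, hb, ← pow_succ', companionMatrix, Matrix.of_apply]
  by_cases hlast : (j : ℕ) + 1 = (minpoly R a).natDegree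
  · rw [if_pos hlast, hlast, pow_natDegree_minpoly_eq_sum ha]
    simp only [← hb, Module.Basis.repr_sum_self]
  · have hlt : (j : ℕ) + 1 < (minpoly R a).natDegree := lt_of_le_of_ne j.isLt hlast
    rw [if_neg hlast, ← hb ⟨_, hlt⟩, Module.Basis.repr_self_apply]
    simp only [Fin.ext_iff, eq_comm]

theorem leftMulMatrix_aeval_eq_aeval_companionMatrix (ha : IsIntegral R a)
    (b : Module.Basis (Fin (minpoly R a).natDegree) R S) (hb : ∀ i, b i = a ^ (i : ℕ))
    (q : R[X]) :
    Algebra.leftMulMatrix b (aeval a q) = aeval (companionMatrix (minpoly R a)) q := by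
  rw [← aeval_algHom_apply, leftMulMatrix_eq_companionMatrix ha b hb]

end CompanionMatrix

theorem aeval_C_mul_add_sum_C_mul {R A ι : Type*} [CommSemiring R] [CommSemiring A] [Algebra R A]
    [Fintype ι] (a : A) (q : R[X]) (x : ι → A) (w : ι → R[X])
    (hw : ∀ i, aeval a q * x i = aeval a (w i)) (c₀ : R) (c : ι → R) :
    aeval a (C c₀ * q + ∑ i, C (c i) * w i) =
      aeval a q * (algebraMap R A c₀ + ∑ i, algebraMap R A (c i) * x i) := by
  simp only [map_add, map_sum, map_mul, aeval_C, ← hw, mul_add, Finset.mul_sum,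
    mul_comm (aeval a q) (algebraMap R A c₀), mul_left_comm (aeval a q) (algebraMap R A _)]

theorem stmt15_general {K L : Type*} [Field K] [Field L] [Algebra K L]
    [FiniteDimensional K L] (n : ℕ)
    (ℓ₀ : L) (hprim : IntermediateField.adjoin K {ℓ₀} = ⊤)
    (x : Fin n → L) (w : Fin n → K[X])
    (hw : ∀ i, Polynomial.aeval ℓ₀ (Polynomial.derivative (minpoly K ℓ₀)) * x i =
      Polynomial.aeval ℓ₀ (w i))
    (c₀ : K) (c : Fin n → K) :
    Polynomial.aeval ℓ₀ (Polynomial.derivative (minpoly K ℓ₀)) *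
        (algebraMap K L c₀ + ∑ i, algebraMap K L (c i) * x i) =
      Polynomial.aeval ℓ₀
        (Polynomial.C c₀ * Polynomial.derivative (minpoly K ℓ₀) +
          ∑ i, Polynomial.C (c i) * w i) ∧
    ((Polynomial.X : K[X]) •
        (Polynomial.aeval (companionMatrix (minpoly K ℓ₀))
          (Polynomial.derivative (minpoly K ℓ₀))).map Polynomial.C -
      (Polynomial.aeval (companionMatrix (minpoly K ℓ₀))
          (Polynomial.C c₀ * Polynomial.derivative (minpoly K ℓ₀) +
            ∑ i, Polynomial.C (c i) * w i)).map Polynomial.C).det =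
    Polynomial.C
        (Polynomial.aeval (companionMatrix (minpoly K ℓ₀))
          (Polynomial.derivative (minpoly K ℓ₀))).det *
      (LinearMap.mulLeft K (algebraMap K L c₀ + ∑ i, algebraMap K L (c i) * x i)).charpoly := by
  have hint : IsIntegral K ℓ₀ := .of_finite K ℓ₀
  have hv := aeval_C_mul_add_sum_C_mul ℓ₀ _ x w hw c₀ c
  refine ⟨hv.symm, ?_⟩
  have hgen : Algebra.adjoin K {ℓ₀} = ⊤ :=
    (IntermediateField.adjoin_simple_eq_top_iff_of_isAlgebraic hint.isAlgebraic).1 hprim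
  let pb := PowerBasis.ofAdjoinEqTop' hint hgen
  let b : Module.Basis (Fin (minpoly K ℓ₀).natDegree) K L := pb.basis
  have hb : ∀ i, b i = ℓ₀ ^ (i : ℕ) := fun i =>
    (pb.basis_eq_pow i).trans (by rw [PowerBasis.ofAdjoinEqTop'_gen])
  rw [← leftMulMatrix_aeval_eq_aeval_companionMatrix hint b hb,
    ← leftMulMatrix_aeval_eq_aeval_companionMatrix hint b hb, hv, map_mul,
    Matrix.det_X_smul_map_C_sub_map_C_mul, ← LinearMap.charpoly_toMatrix _ b,
    Algebra.toMatrix_lmul_eq]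

/-- with `p'(ℓ₀)·xᵢ = wᵢ(ℓ₀)` and `ℓ = c₀ + ∑ cᵢxᵢ`, setting
`v = c₀·p' + ∑ cᵢ·wᵢ` one has `p'(ℓ₀)·ℓ = v(ℓ₀)` and
`det(p'(M_p)·t − v(M_p)) = det(p'(M_p))·χ_ℓ(t)`. -/
theorem stmt15 {K L : Type*} [Field K] [Field L] [Algebra K L]
    [FiniteDimensional K L] (n D : ℕ) (hD : Module.finrank K L = D)
    (ℓ₀ : L) (hprim : IntermediateField.adjoin K {ℓ₀} = ⊤)
    (hsep : (minpoly K ℓ₀).Separable)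
    (x : Fin n → L) (w : Fin n → K[X])
    (hw : ∀ i, Polynomial.aeval ℓ₀ (Polynomial.derivative (minpoly K ℓ₀)) * x i =
      Polynomial.aeval ℓ₀ (w i))
    (c₀ : K) (c : Fin n → K) :
    Polynomial.aeval ℓ₀ (Polynomial.derivative (minpoly K ℓ₀)) *
        (algebraMap K L c₀ + ∑ i, algebraMap K L (c i) * x i) =
      Polynomial.aeval ℓ₀
        (Polynomial.C c₀ * Polynomial.derivative (minpoly K ℓ₀) +
          ∑ i, Polynomial.C (c i) * w i) ∧
    ((Polynomial.X : K[X]) •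
        (Polynomial.aeval (companionMatrix (minpoly K ℓ₀))
          (Polynomial.derivative (minpoly K ℓ₀))).map Polynomial.C -
      (Polynomial.aeval (companionMatrix (minpoly K ℓ₀))
          (Polynomial.C c₀ * Polynomial.derivative (minpoly K ℓ₀) +
            ∑ i, Polynomial.C (c i) * w i)).map Polynomial.C).det =
    Polynomial.C
        (Polynomial.aeval (companionMatrix (minpoly K ℓ₀))
          (Polynomial.derivative (minpoly K ℓ₀))).det *
      (LinearMap.mulLeft K (algebraMap K L c₀ + ∑ i, algebraMap K L (c i) * x i)).charpoly :=
  stmt15_general n ℓ₀ hprim x w hw c₀ c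
end

section
/- Let K ⊆ L be a finite separable field extension of degree D with L = K(ℓ₀), let p ∈ K[t] be the minimal polynomial of ℓ₀, and let f ∈ L. Suppose f = F(x₁, …, x_n) for a polynomial F ∈ K[X₁, …, X_n] of degree at most d and elements x_i ∈ L with p'(ℓ₀)x_i = w_i(ℓ₀), w_i ∈ K[t]. Then det(p'(M_p))^d · N_{L/K}(f) = det( F^h(p'(M_p), w₁(M_p), …, w_n(M_p)) ), where M_p is the companion matrix of p, F^h is the homogenization of F to degree d, and N_{L/K} is the field norm. -/
/-!
Left multiplication in the power basis `1, ℓ₀, …, ℓ₀ ^ (D - 1)` is an algebra embedding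
`L →ₐ[K] Matrix (Fin D) (Fin D) K` that sends `ℓ₀` to the companion matrix `M_p`, hence `q(ℓ₀)` to
`q(M_p)`, and whose determinant is `N_{L/K}`. Clearing denominators with `p'(ℓ₀) xᵢ = wᵢ(ℓ₀)` gives
`p'(ℓ₀) ^ d f = F^h(p'(ℓ₀), w(ℓ₀))` in `L`; applying the embedding and taking determinants turns
this into the claimed identity.
-/

open Polynomial MvPolynomial

namespace PowerBasis

variable {A S : Type*} [CommRing A] [Nontrivial A] [CommRing S] [Algebra A S]

noncomputable def leftMulMatrixMinpoly (pb : PowerBasis A S) :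
    S →ₐ[A] Matrix (Fin (minpoly A pb.gen).natDegree) (Fin (minpoly A pb.gen).natDegree) A :=
  (Matrix.reindexAlgEquiv A A (finCongr pb.natDegree_minpoly.symm)).toAlgHom.comp
    (Algebra.leftMulMatrix pb.basis)

theorem det_leftMulMatrixMinpoly (pb : PowerBasis A S) (a : S) :
    (pb.leftMulMatrixMinpoly a).det = Algebra.norm A a := by
  rw [leftMulMatrixMinpoly, AlgHom.comp_apply, AlgEquiv.coe_toAlgHom, Matrix.coe_reindexAlgEquiv,
    Matrix.det_reindex_self, Algebra.norm_eq_matrix_det pb.basis]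

theorem leftMulMatrixMinpoly_gen (pb : PowerBasis A S) :
    pb.leftMulMatrixMinpoly pb.gen = companionMatrix (minpoly A pb.gen) := by
  ext i j
  simp [leftMulMatrixMinpoly, pb.leftMulMatrix, companionMatrix]

theorem leftMulMatrixMinpoly_aeval_gen (pb : PowerBasis A S) (q : A[X]) :
    pb.leftMulMatrixMinpoly (aeval pb.gen q) = aeval (companionMatrix (minpoly A pb.gen)) q := by
  rw [← Polynomial.aeval_algHom_apply, leftMulMatrixMinpoly_gen]

end PowerBasis

theorem IntermediateField.exists_powerBasis_gen_eq {K L : Type*} [Field K] [Field L]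
    [Algebra K L] {x : L} (hx : IsIntegral K x) (h : IntermediateField.adjoin K {x} = ⊤) :
    ∃ pb : PowerBasis K L, pb.gen = x :=
  ⟨(adjoin.powerBasis hx).map ((equivOfEq h).trans topEquiv), rfl⟩

namespace MvPolynomial

variable {R A B : Type*} [CommSemiring R] {n : ℕ}

/-- `F^h(t, y)` for the degree-`d` homogenization `F^h(T, Y) = T ^ d F(Y / T)`. Each monomial is
multiplied out in index order, so `y` may take values in a noncommutative algebra. -/
noncomputable def evalHomogenization [Semiring A] [Algebra R A] (F : MvPolynomial (Fin n) R)
    (d : ℕ) (t : A) (y : Fin n → A) : A :=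
  ∑ m ∈ F.support, coeff m F • (t ^ (d - m.sum fun _ e => e) * (List.ofFn fun i => y i ^ m i).prod)

theorem map_evalHomogenization [Semiring A] [Algebra R A] [Semiring B] [Algebra R B]
    (φ : A →ₐ[R] B) (F : MvPolynomial (Fin n) R) (d : ℕ) (t : A) (y : Fin n → A) :
    φ (F.evalHomogenization d t y) = F.evalHomogenization d (φ t) fun i => φ (y i) := by
  simp only [evalHomogenization, map_sum, map_smul, map_mul, map_pow, map_list_prod,
    List.map_ofFn, Function.comp_def]

theorem pow_mul_aeval_eq_evalHomogenization [CommSemiring A] [Algebra R A]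
    {F : MvPolynomial (Fin n) R} {d : ℕ} (hF : F.totalDegree ≤ d) (t : A) (x : Fin n → A) :
    t ^ d * aeval x F = F.evalHomogenization d t fun i => t * x i := by
  conv_lhs => rw [F.as_sum]
  rw [map_sum, Finset.mul_sum, evalHomogenization]
  refine Finset.sum_congr rfl fun m hm => ?_
  have hdeg : (m.sum fun _ e => e) ≤ d := (le_totalDegree hm).trans hF
  rw [Finsupp.sum_fintype _ _ fun _ => rfl] at hdeg ⊢
  calc t ^ d * aeval x (monomial m (coeff m F))
      = coeff m F • (t ^ (d - ∑ i, m i) * ((∏ i, t ^ m i) * ∏ i, x i ^ m i)) := by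
        rw [aeval_monomial, Finsupp.prod_fintype _ _ fun _ => pow_zero _, Algebra.smul_def,
          Finset.prod_pow_eq_pow_sum, ← pow_mul_pow_sub t hdeg]
        ring
    _ = _ := by
        rw [List.prod_ofFn, ← Finset.prod_mul_distrib]
        simp only [mul_pow]

end MvPolynomial

theorem stmt19_general {K L : Type*} [Field K] [Field L] [Algebra K L]
    [FiniteDimensional K L] (n d : ℕ)
    (ℓ₀ : L) (hprim : IntermediateField.adjoin K {ℓ₀} = ⊤)
    (x : Fin n → L) (w : Fin n → K[X])
    (hw : ∀ i, Polynomial.aeval ℓ₀ (Polynomial.derivative (minpoly K ℓ₀)) * x i =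
      Polynomial.aeval ℓ₀ (w i))
    (F : MvPolynomial (Fin n) K) (hFdeg : F.totalDegree ≤ d)
    (f : L) (hf : f = MvPolynomial.aeval x F) :
    (Polynomial.aeval (companionMatrix (minpoly K ℓ₀))
          (Polynomial.derivative (minpoly K ℓ₀))).det ^ d *
        Algebra.norm K f =
      (∑ m ∈ F.support,
          MvPolynomial.coeff m F •
            ((Polynomial.aeval (companionMatrix (minpoly K ℓ₀))
                (Polynomial.derivative (minpoly K ℓ₀))) ^ (d - m.sum fun _ e => e) *
              (List.ofFn fun i : Fin n =>
                (Polynomial.aeval (companionMatrix (minpoly K ℓ₀)) (w i)) ^ m i).prod)).det := by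
  obtain ⟨pb, rfl⟩ := IntermediateField.exists_powerBasis_gen_eq (IsIntegral.of_finite K ℓ₀) hprim
  have hcleared := pow_mul_aeval_eq_evalHomogenization hFdeg
    (aeval pb.gen (derivative (minpoly K pb.gen))) x
  simp only [hw, ← hf] at hcleared
  change _ = Matrix.det (F.evalHomogenization d _ _)
  simp only [← pb.leftMulMatrixMinpoly_aeval_gen, ← map_evalHomogenization, ← hcleared, map_mul,
    map_pow, Matrix.det_mul, Matrix.det_pow, pb.det_leftMulMatrixMinpoly]

/-- with `f = F(x₁,…,xₙ)`, `deg F ≤ d` and `p'(ℓ₀)xᵢ = wᵢ(ℓ₀)`,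
`det(p'(M_p))^d · N_{L/K}(f) = det(F^h(p'(M_p), w₁(M_p), …, wₙ(M_p)))`, where the
homogenization `F^h` is evaluated on the commuting matrices `p'(M_p), wᵢ(M_p)`. -/
theorem stmt19 {K L : Type*} [Field K] [Field L] [Algebra K L]
    [FiniteDimensional K L] (n d D : ℕ) (hD : Module.finrank K L = D)
    (ℓ₀ : L) (hprim : IntermediateField.adjoin K {ℓ₀} = ⊤)
    (hsep : (minpoly K ℓ₀).Separable)
    (x : Fin n → L) (w : Fin n → K[X])
    (hw : ∀ i, Polynomial.aeval ℓ₀ (Polynomial.derivative (minpoly K ℓ₀)) * x i =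
      Polynomial.aeval ℓ₀ (w i))
    (F : MvPolynomial (Fin n) K) (hFdeg : F.totalDegree ≤ d)
    (f : L) (hf : f = MvPolynomial.aeval x F) :
    (Polynomial.aeval (companionMatrix (minpoly K ℓ₀))
          (Polynomial.derivative (minpoly K ℓ₀))).det ^ d *
        Algebra.norm K f =
      (∑ m ∈ F.support,
          MvPolynomial.coeff m F •
            ((Polynomial.aeval (companionMatrix (minpoly K ℓ₀))
                (Polynomial.derivative (minpoly K ℓ₀))) ^ (d - m.sum fun _ e => e) *
              (List.ofFn fun i : Fin n =>
                (Polynomial.aeval (companionMatrix (minpoly K ℓ₀)) (w i)) ^ m i).prod)).det :=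
  stmt19_general n d ℓ₀ hprim x w hw F hFdeg f hf
end
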